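/- (Theorem 6.4, second claim) Let ω have Narain coordinates (τ,ũ,z) with Im ũ = ũ₂ > max(ρ(τ), 2/√3), where ρ(τ) = sup_{m∈SL(2,ℤ)} Im(m·τ). If r = (a₁,a₂)(b₁,b₂)(c) ∈ L satisfies ⟨r,r⟩ = -2 and ⟨ω,r⟩ = 0, then a₁ = a₂ = 0, i.e., r ∈ V^⊥. -/

import Mathlib

open Complex

/-- The ℂ-bilinear extension of the form on `Λ` (given by the real matrix `G`)
to `Λ ⊗ ℂ ≅ ℂ¹⁶`. -/
noncomputable def pairC (G : Matrix (Fin 16) (Fin 16) ℝ) (x y : Fin 16 → ℂ) : ℂ :=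
  ∑ i : Fin 16, ∑ j : Fin 16, (G i j : ℂ) * x i * y j

/-- The real form on `Λ ⊗ ℝ ≅ ℝ¹⁶` given by `G`. -/
noncomputable def pairR (G : Matrix (Fin 16) (Fin 16) ℝ) (x y : Fin 16 → ℝ) : ℝ :=
  ∑ i : Fin 16, ∑ j : Fin 16, G i j * x i * y j

/-- The ℂ-bilinear pairing on `L ⊗ ℂ` where `L = H ⊕ H ⊕ Λ`: an element
`(a₁,a₂)(b₁,b₂)(c)` denotes `a₁x₁+a₂x₂+b₁y₁+b₂y₂+c`, and
`⟨(a₁,a₂)(b₁,b₂)(c),(a₁',a₂')(b₁',b₂')(c')⟩ = a₁b₁'+a₂b₂'+b₁a₁'+b₂a₂'+(c,c')`. -/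
noncomputable def pairL (G : Matrix (Fin 16) (Fin 16) ℝ)
    (a₁ a₂ b₁ b₂ : ℂ) (c : Fin 16 → ℂ)
    (a₁' a₂' b₁' b₂' : ℂ) (c' : Fin 16 → ℂ) : ℂ :=
  a₁ * b₁' + a₂ * b₂' + b₁ * a₁' + b₂ * a₂' + pairC G c c'

/-- `ρ(τ) = sup over m ∈ SL(2,ℤ) of Im(m·τ)`. -/
noncomputable def rho (τ : ℂ) : ℝ :=
  sSup {y : ℝ | ∃ a b c d : ℤ, a * d - b * c = 1 ∧
    y = (((a : ℂ) * τ + b) / ((c : ℂ) * τ + d)).im}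

/-!
With `β = a₁ - a₂τ`, the real vector `v = τ₂ c - Im (β̄ z)` of `Λ ⊗ ℝ` satisfies
`(v, v) = 2 τ₂ (|β|² ũ₂ - τ₂)` as soon as `⟨ω, r⟩ = 0` and `⟨r, r⟩ = -2`, so negative
definiteness of `Λ` gives `ũ₂ |β|² ≤ τ₂`. If `(a₁, a₂) ≠ 0`, write `(-a₂, a₁) = g (c, d)` with
`c, d` coprime and complete `(c, d)` to the bottom row of some `m ∈ SL(2, ℤ)`: then
`τ₂ / |β|² ≤ τ₂ / |cτ + d|² = Im (m • τ) ≤ ρ(τ) < ũ₂`, a contradiction.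
-/

open scoped UpperHalfPlane MatrixGroups ComplexConjugate

section Lattice

variable {G : Matrix (Fin 16) (Fin 16) ℝ}

theorem pairR_eq_toLinearMap₂' (x y : Fin 16 → ℝ) :
    pairR G x y = Matrix.toLinearMap₂' ℝ G x y := by
  simp only [pairR, Matrix.toLinearMap₂'_apply, smul_eq_mul]
  exact Finset.sum_congr rfl fun i _ => Finset.sum_congr rfl fun j _ => by ring

theorem pairR_comm (hsym : ∀ i j, G i j = G j i) (x y : Fin 16 → ℝ) :
    pairR G x y = pairR G y x := by
  unfold pairR
  rw [Finset.sum_comm]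
  exact Finset.sum_congr rfl fun i _ => Finset.sum_congr rfl fun j _ => by rw [hsym]; ring

theorem pairR_self_nonpos (hneg : ∀ v : Fin 16 → ℝ, v ≠ 0 → pairR G v v < 0)
    (v : Fin 16 → ℝ) : pairR G v v ≤ 0 := by
  rcases eq_or_ne v 0 with rfl | hv
  · simp [pairR]
  · exact (hneg v hv).le

theorem pairR_lincomb_self (hsym : ∀ i j, G i j = G j i) (p q r : ℝ) (C X Y : Fin 16 → ℝ) :
    pairR G (p • C + q • X + r • Y) (p • C + q • X + r • Y) =
      p ^ 2 * pairR G C C + q ^ 2 * pairR G X X + r ^ 2 * pairR G Y Y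
        + 2 * p * q * pairR G C X + 2 * p * r * pairR G C Y + 2 * q * r * pairR G X Y := by
  simp only [pairR_eq_toLinearMap₂', map_add, map_smul, LinearMap.add_apply,
    LinearMap.smul_apply, smul_eq_mul]
  simp only [← pairR_eq_toLinearMap₂', pairR_comm hsym X C, pairR_comm hsym Y C,
    pairR_comm hsym Y X]
  ring

theorem pairC_ofReal_right (z : Fin 16 → ℂ) (f : Fin 16 → ℝ) :
    pairC G z (fun i => (f i : ℂ)) =
      pairR G (fun i => (z i).re) f + pairR G (fun i => (z i).im) f * I := by
  apply Complex.ext <;> simp [pairC, pairR, mul_re, mul_im, mul_assoc]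

theorem pairC_self (hsym : ∀ i j, G i j = G j i) (z : Fin 16 → ℂ) :
    pairC G z z = pairR G (fun i => (z i).re) (fun i => (z i).re)
      - pairR G (fun i => (z i).im) (fun i => (z i).im)
      + 2 * pairR G (fun i => (z i).re) (fun i => (z i).im) * I := by
  have hcomm := pairR_comm hsym (fun i => (z i).im) (fun i => (z i).re)
  apply Complex.ext
  · simp [pairC, pairR, mul_re, mul_im, mul_sub, mul_assoc, Finset.sum_sub_distrib]
  · simp [pairC, pairR, mul_re, mul_im, mul_add, mul_assoc, Finset.sum_add_distrib] at hcomm ⊢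
    rw [hcomm]
    ring

/-- `⟨ω, r⟩` for the period `ω` with Narain coordinates `(τ, ut, z)` and
`r = (a₁,a₂)(b₁,b₂)(c)`. -/
noncomputable def periodPairing (G : Matrix (Fin 16) (Fin 16) ℝ) (τ ut : ℂ) (z : Fin 16 → ℂ)
    (a₁ a₂ b₁ b₂ : ℤ) (c : Fin 16 → ℤ) : ℂ :=
  pairL G τ 1
    (ut - pairC G z (fun i => ((z i).im : ℂ)) / ((2 * τ.im : ℝ) : ℂ))
    (-τ * ut + τ * pairC G z (fun i => ((z i).im : ℂ)) / ((2 * τ.im : ℝ) : ℂ)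
      - pairC G z z / 2)
    z (a₁ : ℂ) (a₂ : ℂ) (b₁ : ℂ) (b₂ : ℂ) (fun i => (c i : ℂ))

/- Multiplying `⟨ω, r⟩` by `β̄` turns the `b`-part into `τ₂ (a₁b₁ + a₂b₂)` in the imaginary
part, which `⟨r, r⟩` controls; what is left is the norm of `v`. -/
theorem im_conj_mul_periodPairing (hsym : ∀ i j, G i j = G j i) {τ : ℂ} (hτ : τ.im ≠ 0)
    (ut : ℂ) (z : Fin 16 → ℂ) (a₁ a₂ b₁ b₂ : ℤ) (c : Fin 16 → ℤ) :
    let β : ℂ := a₁ - a₂ * τ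
    let v : Fin 16 → ℝ := fun i => τ.im * c i - (conj β * z i).im
    2 * τ.im * (conj β * periodPairing G τ ut z a₁ a₂ b₁ b₂ c).im =
      τ.im ^ 2 * (2 * ((a₁ : ℝ) * b₁ + (a₂ : ℝ) * b₂)
          + pairR G (fun i => (c i : ℝ)) (fun i => (c i : ℝ)))
        + 2 * τ.im * normSq β * ut.im - pairR G v v := by
  intro β v
  set x : Fin 16 → ℝ := fun i => (z i).re
  set y : Fin 16 → ℝ := fun i => (z i).im
  set cR : Fin 16 → ℝ := fun i => (c i : ℝ)
  have hv : v = τ.im • cR + β.im • x + (-β.re) • y := by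
    ext i
    simp [v, x, y, cR, mul_im]
    ring
  have hcR : (fun i => ((c i : ℤ) : ℂ)) = fun i => (cR i : ℂ) := by
    ext i
    simp [cR]
  rw [hv, pairR_lincomb_self hsym, pairR_comm hsym cR x, pairR_comm hsym cR y]
  simp only [periodPairing, pairL, hcR, pairC_ofReal_right, pairC_self hsym]
  simp [β, mul_im, mul_re, div_re, div_im, normSq]
  field_simp
  ring

theorem im_mul_normSq_le_im_of_root (hsym : ∀ i j, G i j = G j i)
    (hneg : ∀ v : Fin 16 → ℝ, v ≠ 0 → pairR G v v < 0)
    {τ : ℂ} (hτ : 0 < τ.im) (ut : ℂ) (z : Fin 16 → ℂ) {a₁ a₂ b₁ b₂ : ℤ} {c : Fin 16 → ℤ}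
    (hroot : 2 * ((a₁ : ℝ) * b₁ + (a₂ : ℝ) * b₂)
        + pairR G (fun i => (c i : ℝ)) (fun i => (c i : ℝ)) = -2)
    (horth : periodPairing G τ ut z a₁ a₂ b₁ b₂ c = 0) :
    ut.im * normSq ((a₁ : ℂ) - a₂ * τ) ≤ τ.im := by
  have h := im_conj_mul_periodPairing hsym hτ.ne' ut z a₁ a₂ b₁ b₂ c
  dsimp only at h
  rw [horth, hroot, mul_zero, zero_im, mul_zero] at h
  nlinarith [pairR_self_nonpos hneg (fun i => τ.im * c i - (conj ((a₁ : ℂ) - a₂ * τ) * z i).im)]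

end Lattice

section Modular

theorem im_smul_eq_im_div (g : SL(2, ℤ)) (τ : ℍ) :
    (g • τ).im = (((g 0 0 : ℂ) * τ + g 0 1) / ((g 1 0 : ℂ) * τ + g 1 1)).im := by
  rw [← UpperHalfPlane.coe_im, UpperHalfPlane.coe_specialLinearGroup_apply]
  simp

theorem rho_set_eq_range (τ : ℍ) :
    {y : ℝ | ∃ a b c d : ℤ, a * d - b * c = 1 ∧
      y = (((a : ℂ) * τ + b) / ((c : ℂ) * τ + d)).im} =
      Set.range fun g : SL(2, ℤ) => (g • τ).im := by
  ext y
  constructor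
  · rintro ⟨a, b, c, d, hdet, rfl⟩
    exact ⟨⟨!![a, b; c, d], by rwa [Matrix.det_fin_two_of]⟩,
      (im_smul_eq_im_div _ τ).trans (by simp)⟩
  · rintro ⟨g, rfl⟩
    exact ⟨g 0 0, g 0 1, g 1 0, g 1 1, by rw [← Matrix.det_fin_two, g.det_coe],
      im_smul_eq_im_div g τ⟩

theorem im_smul_le_rho (τ : ℍ) (g : SL(2, ℤ)) : (g • τ).im ≤ rho τ := by
  obtain ⟨g₀, hg₀⟩ := ModularGroup.exists_max_im τ
  rw [rho, rho_set_eq_range]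
  exact le_csSup ⟨_, Set.forall_mem_range.2 hg₀⟩ (Set.mem_range_self g)

theorem div_normSq_le_rho (τ : ℍ) {c d : ℤ} (hcd : IsCoprime c d) :
    τ.im / normSq (c * τ + d) ≤ rho τ := by
  obtain ⟨g, -, hg⟩ := ModularGroup.bottom_row_surj (R := ℤ)
    (show ![c, d] ∈ {cd : Fin 2 → ℤ | IsCoprime (cd 0) (cd 1)} from hcd)
  have hc : g 1 0 = c := congrFun hg 0
  have hd : g 1 1 = d := congrFun hg 1
  have hle := im_smul_le_rho τ g
  rwa [ModularGroup.im_smul_eq_div_normSq, ModularGroup.denom_apply, hc, hd] at hle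

theorem div_normSq_sub_mul_le_rho (τ : ℍ) {a₁ a₂ : ℤ} (ha : ¬(a₁ = 0 ∧ a₂ = 0)) :
    τ.im / normSq (a₁ - a₂ * τ) ≤ rho τ := by
  have hgcd : 0 < Int.gcd (-a₂) a₁ := Int.gcd_pos_iff.2 (by omega)
  obtain ⟨g, c, d, hg, hcd, hc, rfl⟩ := Int.exists_gcd_one' hgcd
  have hsplit : ((d * g : ℤ) : ℂ) - a₂ * τ = (g : ℝ) * (c * τ + d) := by
    rw [show a₂ = -(c * g) by omega]
    push_cast
    ring
  rw [hsplit, normSq_mul, normSq_ofReal]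
  calc τ.im / ((g : ℝ) * g * normSq (c * τ + d)) ≤ τ.im / normSq (c * τ + d) := by
        rcases (normSq_nonneg ((c : ℂ) * τ + d)).eq_or_lt with h0 | hpos
        · simp [← h0]
        · gcongr
          exact le_mul_of_one_le_left hpos.le (by norm_cast; nlinarith)
    _ ≤ rho τ := div_normSq_le_rho τ (Int.isCoprime_iff_gcd_eq_one.2 hcd)

end Modular

theorem normSq_sub_mul_pos {τ : ℂ} (hτ : 0 < τ.im) {a₁ a₂ : ℤ} (ha : ¬(a₁ = 0 ∧ a₂ = 0)) :
    0 < normSq ((a₁ : ℂ) - a₂ * τ) := by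
  refine normSq_pos.2 fun h => ha ?_
  have h₂ : a₂ = 0 := by simpa [hτ.ne'] using congrArg im h
  subst h₂
  simpa using h

/-- Theorem 6.4, second claim: if the period `ω` has Narain coordinates `(τ,ut,z)`
with `Im ut > max(ρ(τ), 2/√3)`, then every root `r = (a₁,a₂)(b₁,b₂)(c)` with
`⟨r,r⟩ = -2` and `⟨ω,r⟩ = 0` satisfies `a₁ = a₂ = 0`, i.e. `r ∈ V^⊥`. -/
theorem stmt16 (G : Matrix (Fin 16) (Fin 16) ℝ)
    (hsym : ∀ i j, G i j = G j i)
    (hneg : ∀ v : Fin 16 → ℝ, v ≠ 0 → pairR G v v < 0)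
    (τ ut : ℂ) (z : Fin 16 → ℂ) (hτ : 0 < τ.im)
    (hlarge : max (rho τ) (2 / Real.sqrt 3) < ut.im)
    (a₁ a₂ b₁ b₂ : ℤ) (c : Fin 16 → ℤ)
    (hroot : 2 * ((a₁ : ℝ) * b₁ + (a₂ : ℝ) * b₂)
        + pairR G (fun i => (c i : ℝ)) (fun i => (c i : ℝ)) = -2)
    (horth : pairL G τ 1
        (ut - pairC G z (fun i => ((z i).im : ℂ)) / ((2 * τ.im : ℝ) : ℂ))
        (-τ * ut + τ * pairC G z (fun i => ((z i).im : ℂ)) / ((2 * τ.im : ℝ) : ℂ)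
          - pairC G z z / 2)
        z (a₁ : ℂ) (a₂ : ℂ) (b₁ : ℂ) (b₂ : ℂ) (fun i => (c i : ℂ)) = 0) :
    a₁ = 0 ∧ a₂ = 0 := by
  by_contra ha
  have hkey := im_mul_normSq_le_im_of_root hsym hneg hτ ut z hroot horth
  have hρ : τ.im / normSq ((a₁ : ℂ) - a₂ * τ) < ut.im :=
    (div_normSq_sub_mul_le_rho ⟨τ, hτ⟩ ha).trans_lt ((le_max_left _ _).trans_lt hlarge)
  rw [div_lt_iff₀ (normSq_sub_mul_pos hτ ha)] at hρ
  linarith
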